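/- Let ε ∈ (0,1), δ ∈ (0,1), Δ > 0, and set σ = (Δ/ε)·√(2·ln(1.25/δ)). Then for all real numbers a, b with |a − b| ≤ Δ: Φ(a/σ) ≤ e^{ε}·Φ(b/σ) + δ and 1 − Φ(a/σ) ≤ e^{ε}·(1 − Φ(b/σ)) + δ, where Φ is the standard normal CDF. -/

import Mathlib

open MeasureTheory

/-- The standard normal CDF `Φ(x) = ∫_{-∞}^{x} e^{-t²/2}/√(2π) dt`. -/
noncomputable def stdGaussianCDF (x : ℝ) : ℝ :=
  (∫ t in Set.Iic x, Real.exp (-(t ^ 2) / 2)) / Real.sqrt (2 * Real.pi)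

/-!
With `φ(u) = e^{-u²/2}` one has `φ(u) ≤ e^ε φ(u - c)` exactly when `u ≥ w := c/2 - ε/c`, so
integrating over `(w, t]` gives `Φ(t) ≤ Φ(w) + e^ε Φ(t - c)` for every `c > 0`. When
`c = t - s ≤ ε / r` with `r = √(2 ln(1.25/δ))` and `ε ≤ 1`, we have `w ≤ 1/(2r) - r`, and
`Φ(1/(2r) - r) ≤ 1.25 e^{-r²/2} = δ`: for `r² ≥ 1/2` by the tail bound `Φ(-x) ≤ e^{-x²/2}/2`, for
smaller `r` because the density is at most `1/√(2π)`. The second inequality is the first one for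
`-a, -b`, as `Φ(-x) = 1 - Φ(x)`.
-/

open Set Real

noncomputable def gaussKernel (t : ℝ) : ℝ := exp (-(t ^ 2) / 2)

lemma gaussKernel_nonneg (t : ℝ) : 0 ≤ gaussKernel t := (exp_pos _).le

lemma gaussKernel_le_one (t : ℝ) : gaussKernel t ≤ 1 :=
  exp_le_one_iff.mpr (by nlinarith [sq_nonneg t])

lemma gaussKernel_neg (t : ℝ) : gaussKernel (-t) = gaussKernel t := by
  simp [gaussKernel]

lemma gaussKernel_eq_exp_mul_gaussKernel_add (l u : ℝ) :
    gaussKernel u = exp (l * u + l ^ 2 / 2) * gaussKernel (u + l) := by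
  simp only [gaussKernel, ← exp_add]
  ring_nf

lemma gaussKernel_eq_exp_neg_mul_sq : gaussKernel = fun t => exp (-(1 / 2) * t ^ 2) := by
  ext t
  rw [gaussKernel]
  ring_nf

lemma integrable_gaussKernel : Integrable gaussKernel :=
  gaussKernel_eq_exp_neg_mul_sq ▸ integrable_exp_neg_mul_sq (by norm_num)

lemma integral_gaussKernel : ∫ t, gaussKernel t = √(2 * π) := by
  rw [gaussKernel_eq_exp_neg_mul_sq, integral_gaussian]
  ring_nf

lemma stdGaussianCDF_eq (x : ℝ) :
    stdGaussianCDF x = (∫ t in Iic x, gaussKernel t) / √(2 * π) := rfl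

lemma stdGaussianCDF_nonneg (x : ℝ) : 0 ≤ stdGaussianCDF x :=
  div_nonneg (setIntegral_nonneg measurableSet_Iic fun t _ => gaussKernel_nonneg t) (sqrt_nonneg _)

lemma monotone_stdGaussianCDF : Monotone stdGaussianCDF := fun x y h => by
  rw [stdGaussianCDF_eq, stdGaussianCDF_eq]
  exact div_le_div_of_nonneg_right (setIntegral_mono_set integrable_gaussKernel.integrableOn
    (.of_forall gaussKernel_nonneg) (Iic_subset_Iic.mpr h).eventuallyLE) (sqrt_nonneg _)

lemma stdGaussianCDF_neg (x : ℝ) : stdGaussianCDF (-x) = 1 - stdGaussianCDF x := by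
  have hsplit := intervalIntegral.integral_Iic_add_Ioi (b := x)
    integrable_gaussKernel.integrableOn integrable_gaussKernel.integrableOn
  have hreflect : ∫ t in Iic (-x), gaussKernel t = ∫ t in Ioi x, gaussKernel t := by
    simpa [gaussKernel_neg] using integral_comp_neg_Iic (-x) gaussKernel
  rw [integral_gaussKernel] at hsplit
  rw [stdGaussianCDF_eq, stdGaussianCDF_eq, hreflect, eq_sub_iff_add_eq, ← add_div, add_comm, hsplit,
    div_self (by positivity)]

lemma stdGaussianCDF_zero : stdGaussianCDF 0 = 1 / 2 := by
  linarith [neg_zero (G := ℝ) ▸ stdGaussianCDF_neg 0]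

lemma stdGaussianCDF_sub_eq {x y : ℝ} (h : x ≤ y) :
    stdGaussianCDF y - stdGaussianCDF x = (∫ t in Ioc x y, gaussKernel t) / √(2 * π) := by
  rw [stdGaussianCDF_eq, stdGaussianCDF_eq, ← sub_div, ← Iic_union_Ioc_eq_Iic h,
    setIntegral_union (Iic_disjoint_Ioc le_rfl) measurableSet_Ioc
      integrable_gaussKernel.integrableOn integrable_gaussKernel.integrableOn, add_sub_cancel_left]

lemma stdGaussianCDF_sub_le {x y : ℝ} (h : x ≤ y) :
    stdGaussianCDF y - stdGaussianCDF x ≤ (y - x) / √(2 * π) := by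
  rw [stdGaussianCDF_sub_eq h]
  gcongr
  calc ∫ t in Ioc x y, gaussKernel t ≤ ∫ _ in Ioc x y, (1 : ℝ) :=
        setIntegral_mono integrable_gaussKernel.integrableOn (integrableOn_const (by simp))
          gaussKernel_le_one
    _ = y - x := by simp [h]

lemma setIntegral_gaussKernel_preimage_add_le {T : Set ℝ} (hT : MeasurableSet T) {l κ : ℝ}
    (h : ∀ u, u + l ∈ T → l * u + l ^ 2 / 2 ≤ κ) :
    ∫ u in (· + l) ⁻¹' T, gaussKernel u ≤ exp κ * ∫ u in T, gaussKernel u := by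
  have hshift : ∫ u in (· + l) ⁻¹' T, gaussKernel (u + l) = ∫ u in T, gaussKernel u :=
    (measurePreserving_add_right volume l).setIntegral_preimage_emb
      (measurableEmbedding_addRight l) _ _
  rw [← hshift, ← integral_const_mul]
  refine setIntegral_mono_on integrable_gaussKernel.integrableOn
    ((integrable_gaussKernel.comp_add_right l).const_mul _).integrableOn
    (hT.preimage (measurable_add_const l)) fun u hu => ?_
  rw [gaussKernel_eq_exp_mul_gaussKernel_add l u]
  exact mul_le_mul_of_nonneg_right (exp_le_exp.mpr (h u hu)) (gaussKernel_nonneg _)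

lemma stdGaussianCDF_neg_le {x : ℝ} (hx : 0 ≤ x) :
    stdGaussianCDF (-x) ≤ exp (-(x ^ 2) / 2) / 2 := by
  have h := setIntegral_gaussKernel_preimage_add_le measurableSet_Iic (T := Iic 0) (l := x)
    (κ := -(x ^ 2) / 2) fun u hu => by
      simp only [mem_Iic] at hu
      nlinarith
  rw [preimage_add_const_Iic, zero_sub] at h
  calc stdGaussianCDF (-x) ≤ exp (-(x ^ 2) / 2) * stdGaussianCDF 0 := by
        rw [stdGaussianCDF_eq, stdGaussianCDF_eq, mul_div_assoc']
        gcongr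
    _ = _ := by rw [stdGaussianCDF_zero]; ring

lemma stdGaussianCDF_le_add_exp_mul {c : ℝ} (hc : 0 < c) (ε t : ℝ) :
    stdGaussianCDF t ≤ stdGaussianCDF (c / 2 - ε / c) + exp ε * stdGaussianCDF (t - c) := by
  set w := c / 2 - ε / c with hw
  rcases le_total t w with htw | hwt
  · nlinarith [monotone_stdGaussianCDF htw, exp_pos ε, stdGaussianCDF_nonneg (t - c)]
  have hcw : c * w = c ^ 2 / 2 - ε := by rw [hw]; field_simp
  have hshift := setIntegral_gaussKernel_preimage_add_le measurableSet_Ioc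
    (T := Ioc (w - c) (t - c)) (l := -c) (κ := ε) fun u hu => by
      simp only [mem_Ioc] at hu
      nlinarith
  rw [preimage_add_const_Ioc, sub_neg_eq_add, sub_neg_eq_add, sub_add_cancel, sub_add_cancel]
    at hshift
  have hsub : ∫ u in Ioc (w - c) (t - c), gaussKernel u ≤ ∫ u in Iic (t - c), gaussKernel u :=
    setIntegral_mono_set integrable_gaussKernel.integrableOn
      (.of_forall gaussKernel_nonneg) Ioc_subset_Iic_self.eventuallyLE
  calc stdGaussianCDF t = stdGaussianCDF w + (∫ u in Ioc w t, gaussKernel u) / √(2 * π) := by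
        rw [← stdGaussianCDF_sub_eq hwt]; ring
    _ ≤ stdGaussianCDF w + exp ε * (∫ u in Iic (t - c), gaussKernel u) / √(2 * π) := by
        gcongr
        exact hshift.trans (by gcongr)
    _ = _ := by rw [stdGaussianCDF_eq (t - c)]; ring

lemma stdGaussianCDF_inv_two_mul_sub_le {r : ℝ} (hr : 0 < r) (hr2 : 2 / 5 ≤ r ^ 2) :
    stdGaussianCDF ((2 * r)⁻¹ - r) ≤ 5 / 4 * exp (-(r ^ 2) / 2) := by
  have hinv : (2 * r)⁻¹ * (2 * r) = 1 := inv_mul_cancel₀ (by positivity)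
  rcases le_total (1 / 2) (r ^ 2) with hbig | hsmall
  · set x := r - (2 * r)⁻¹
    have hx : 0 ≤ x := by nlinarith
    have hx2 : r ^ 2 - 1 ≤ x ^ 2 := by nlinarith [sq_nonneg (2 * r)⁻¹]
    have hexp : exp (1 / 2) < 2 := by
      have := exp_bound_div_one_sub_of_interval' (x := 1 / 2) (by norm_num) (by norm_num)
      norm_num at this
      exact this
    calc stdGaussianCDF ((2 * r)⁻¹ - r) = stdGaussianCDF (-x) := by rw [neg_sub]
      _ ≤ exp (-(x ^ 2) / 2) / 2 := stdGaussianCDF_neg_le hx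
      _ ≤ exp (1 / 2 + -(r ^ 2) / 2) / 2 := by gcongr; linarith
      _ = exp (1 / 2) * exp (-(r ^ 2) / 2) / 2 := by rw [exp_add]
      _ ≤ 5 / 4 * exp (-(r ^ 2) / 2) := by nlinarith [exp_pos (-(r ^ 2) / 2)]
  · have hr35 : 3 / 5 ≤ r := by nlinarith
    have hW : 0 ≤ (2 * r)⁻¹ - r := by nlinarith
    have hW' : (2 * r)⁻¹ - r ≤ 7 / 16 := by nlinarith
    have hexp : exp (1 / 4) < 4 / 3 := by
      have := exp_bound_div_one_sub_of_interval' (x := 1 / 4) (by norm_num) (by norm_num)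
      norm_num at this
      exact this
    have hlow : 3 / 4 ≤ exp (-(r ^ 2) / 2) := by
      calc (3 / 4 : ℝ) ≤ (exp (1 / 4))⁻¹ := by
            rw [le_inv_comm₀ (by norm_num) (exp_pos _)]; linarith
        _ = exp (-(1 / 4)) := (exp_neg _).symm
        _ ≤ exp (-(r ^ 2) / 2) := by gcongr; linarith
    have hlip := stdGaussianCDF_sub_le hW
    rw [stdGaussianCDF_zero, sub_zero] at hlip
    have hsqrt : 1 ≤ √(2 * π) := one_le_sqrt.mpr (by nlinarith [pi_gt_three])
    have hW_div := div_le_self hW hsqrt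
    linarith

theorem stdGaussianCDF_le_exp_mul_add {ε δ t s : ℝ} (hε₀ : 0 ≤ ε) (hε₁ : ε ≤ 1)
    (hδ₀ : 0 < δ) (hδ₁ : δ ≤ 1) (hts : (t - s) * √(2 * log (1.25 / δ)) ≤ ε) :
    stdGaussianCDF t ≤ exp ε * stdGaussianCDF s + δ := by
  rcases le_or_gt t s with hle | hlt
  · nlinarith [monotone_stdGaussianCDF hle, stdGaussianCDF_nonneg s, one_le_exp hε₀]
  set r := √(2 * log (1.25 / δ))
  have hlog : 1 / 5 < log (1.25 / δ) := by
    have hexp := exp_bound_div_one_sub_of_interval' (x := 1 / 5) (by norm_num) (by norm_num)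
    calc (1 / 5 : ℝ) < log 1.25 := by
          rw [lt_log_iff_exp_lt (by norm_num)]; norm_num at hexp ⊢; exact hexp
      _ ≤ log (1.25 / δ) := log_le_log (by norm_num) (by rw [le_div_iff₀ hδ₀]; nlinarith)
  have hr2 : r ^ 2 = 2 * log (1.25 / δ) := sq_sqrt (by linarith)
  have hr : 0 < r := sqrt_pos.mpr (by linarith)
  have hδ : δ = 5 / 4 * exp (-(r ^ 2) / 2) := by
    rw [hr2, show -(2 * log (1.25 / δ)) / 2 = -log (1.25 / δ) by ring, exp_neg,
      exp_log (by positivity)]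
    field_simp
    norm_num
  set c := t - s
  have hc : 0 < c := sub_pos.mpr hlt
  have hw : c / 2 - ε / c ≤ (2 * r)⁻¹ - r := by
    have h1 : c / 2 ≤ (2 * r)⁻¹ := by
      rw [← one_div, le_div_iff₀ (by positivity)]
      nlinarith
    have h2 : r ≤ ε / c := by rw [le_div_iff₀ hc]; linarith
    linarith
  calc stdGaussianCDF t ≤ stdGaussianCDF (c / 2 - ε / c) + exp ε * stdGaussianCDF (t - c) :=
        stdGaussianCDF_le_add_exp_mul hc ε t
    _ ≤ 5 / 4 * exp (-(r ^ 2) / 2) + exp ε * stdGaussianCDF s := by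
        rw [show t - c = s by ring]
        gcongr
        exact (monotone_stdGaussianCDF hw).trans (stdGaussianCDF_inv_two_mul_sub_le hr (by linarith))
    _ = _ := by rw [← hδ]; ring

theorem stmt_3 (ε δ : ℝ) (hε : ε ∈ Set.Ioo (0 : ℝ) 1) (hδ : δ ∈ Set.Ioo (0 : ℝ) 1)
    (Δ : ℝ)
    (σ : ℝ) (hσ : σ = Δ / ε * Real.sqrt (2 * Real.log (1.25 / δ)))
    (a b : ℝ) (hab : |a - b| ≤ Δ) :
    stdGaussianCDF (a / σ) ≤ Real.exp ε * stdGaussianCDF (b / σ) + δ ∧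
    1 - stdGaussianCDF (a / σ) ≤ Real.exp ε * (1 - stdGaussianCDF (b / σ)) + δ := by
  obtain ⟨hε₀, hε₁⟩ := hε
  obtain ⟨hδ₀, hδ₁⟩ := hδ
  have hΔ : 0 ≤ Δ := (abs_nonneg _).trans hab
  have hr : 0 < √(2 * log (1.25 / δ)) :=
    sqrt_pos.mpr (mul_pos two_pos (log_pos ((one_lt_div hδ₀).mpr (by linarith))))
  have hscaled : ∀ a b : ℝ, |a - b| ≤ Δ → (a / σ - b / σ) * √(2 * log (1.25 / δ)) ≤ ε := by
    intro a b hab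
    rw [← sub_div, hσ, div_mul_eq_mul_div, mul_div_mul_right _ _ hr.ne', div_div_eq_mul_div]
    exact div_le_of_le_mul₀ hΔ hε₀.le (by nlinarith [le_abs_self (a - b)])
  refine ⟨stdGaussianCDF_le_exp_mul_add hε₀.le hε₁.le hδ₀ hδ₁.le (hscaled a b hab), ?_⟩
  rw [← stdGaussianCDF_neg, ← stdGaussianCDF_neg, ← neg_div, ← neg_div]
  exact stdGaussianCDF_le_exp_mul_add hε₀.le hε₁.le hδ₀ hδ₁.le
    (hscaled (-a) (-b) (by rwa [neg_sub_neg, abs_sub_comm]))
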